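/- Convergence (eventual consistency): if H is injective, then for any two lists L and L' of values in Σ × ℕ that are permutations of each other, folding the merge operation over L and over L' yields the same value; hence any two workers that have received the same set of state updates, in any delivery order, hold identical merged state. -/

import Mathlib

/-!
`≤ₑ` is the lexicographic order on `(t, H v)` pulled back along `(v, t) ↦ (t, H v)`, hence a total
preorder, and an order when `H` is injective. `merge` keeps the `≤ₑ`-larger of its arguments, so
folding it over a list returns a `≤ₑ`-greatest element of that list. Two permuted lists have the
same elements, so their folds are `≤ₑ`-greatest in each other's list; by antisymmetry they coincide.
-/

/-- The relation `≤ₑ` on values `(v, t) ∈ Σ × ℕ`: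
`(v₁,t₁) ≤ₑ (v₂,t₂)` iff `t₁ < t₂`, or (`t₁ = t₂` and `H v₁ ≤ H v₂`). -/
def leE {σ : Type*} (H : σ → ℕ) (V₁ V₂ : σ × ℕ) : Prop :=
  V₁.2 < V₂.2 ∨ (V₁.2 = V₂.2 ∧ H V₁.1 ≤ H V₂.1)

open Classical in
/-- `merge V₁ V₂ = V₂` if `V₁ ≤ₑ V₂`, and `V₁` otherwise. -/
noncomputable def merge {σ : Type*} (H : σ → ℕ) (V₁ V₂ : σ × ℕ) : σ × ℕ :=
  if leE H V₁ V₂ then V₂ else V₁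

section

variable {σ : Type*} {H : σ → ℕ}

theorem leE_iff_toLex_le (V₁ V₂ : σ × ℕ) :
    leE H V₁ V₂ ↔ toLex (V₁.2, H V₁.1) ≤ toLex (V₂.2, H V₂.1) := by
  rw [Prod.Lex.toLex_le_toLex]
  rfl

theorem leE_refl (V : σ × ℕ) : leE H V V :=
  (leE_iff_toLex_le V V).2 le_rfl

theorem leE_total (V₁ V₂ : σ × ℕ) : leE H V₁ V₂ ∨ leE H V₂ V₁ := by
  simpa only [leE_iff_toLex_le] using le_total _ _

theorem leE_trans {V₁ V₂ V₃ : σ × ℕ} (h₁₂ : leE H V₁ V₂) (h₂₃ : leE H V₂ V₃) :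
    leE H V₁ V₃ := by
  rw [leE_iff_toLex_le] at *
  exact h₁₂.trans h₂₃

theorem leE_antisymm (hH : Function.Injective H) {V₁ V₂ : σ × ℕ}
    (h₁₂ : leE H V₁ V₂) (h₂₁ : leE H V₂ V₁) : V₁ = V₂ := by
  rw [leE_iff_toLex_le] at h₁₂ h₂₁
  have hkey := congrArg ofLex (le_antisymm h₁₂ h₂₁)
  simp only [ofLex_toLex, Prod.mk.injEq] at hkey
  exact Prod.ext (hH hkey.2) hkey.1

theorem merge_eq_or (V₁ V₂ : σ × ℕ) : merge H V₁ V₂ = V₁ ∨ merge H V₁ V₂ = V₂ := by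
  unfold merge
  split_ifs
  exacts [Or.inr rfl, Or.inl rfl]

theorem leE_merge_left (V₁ V₂ : σ × ℕ) : leE H V₁ (merge H V₁ V₂) := by
  unfold merge
  split_ifs with h
  exacts [h, leE_refl V₁]

theorem leE_merge_right (V₁ V₂ : σ × ℕ) : leE H V₂ (merge H V₁ V₂) := by
  unfold merge
  split_ifs with h
  exacts [leE_refl V₂, (leE_total V₁ V₂).resolve_left h]

theorem foldl_merge_mem (a : σ × ℕ) (t : List (σ × ℕ)) : t.foldl (merge H) a ∈ a :: t := by
  induction t generalizing a with
  | nil => exact List.mem_singleton_self a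
  | cons b t ih =>
    rw [List.foldl_cons]
    have hmem := ih (merge H a b)
    rcases merge_eq_or (H := H) a b with hab | hab <;> rw [hab] at hmem ⊢
    · exact List.cons_subset_cons a (List.subset_cons_self b t) hmem
    · exact List.mem_cons_of_mem a hmem

theorem leE_foldl_merge (a : σ × ℕ) (t : List (σ × ℕ)) :
    ∀ y ∈ a :: t, leE H y (t.foldl (merge H) a) := by
  induction t generalizing a with
  | nil =>
    intro y hy
    rw [List.mem_singleton.1 hy]
    exact leE_refl a
  | cons b t ih =>
    intro y hy
    rw [List.foldl_cons]
    have hmerge := ih (merge H a b)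
    rcases List.mem_cons.1 hy with rfl | hy
    · exact leE_trans (leE_merge_left y b) (hmerge _ List.mem_cons_self)
    rcases List.mem_cons.1 hy with rfl | hy
    · exact leE_trans (leE_merge_right a y) (hmerge _ List.mem_cons_self)
    · exact hmerge y (List.mem_cons_of_mem _ hy)

end

/-- Convergence: if `H` is injective, folding merge over two lists that are
permutations of each other yields the same value, so workers that received
the same updates in any order hold identical merged state. -/
theorem merge_fold_perm {σ : Type*} (H : σ → ℕ) (hH : Function.Injective H) :
    ∀ (L L' : List (σ × ℕ)) (hL : L ≠ []) (hL' : L' ≠ []),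
      L.Perm L' →
      L.tail.foldl (merge H) (L.head hL) =
        L'.tail.foldl (merge H) (L'.head hL') := by
  intro L L' hL hL' hperm
  obtain ⟨a, t, rfl⟩ := List.exists_cons_of_ne_nil hL
  obtain ⟨a', t', rfl⟩ := List.exists_cons_of_ne_nil hL'
  simp only [List.head_cons, List.tail_cons]
  exact leE_antisymm hH
    (leE_foldl_merge a' t' _ (hperm.subset (foldl_merge_mem a t)))
    (leE_foldl_merge a t _ (hperm.symm.subset (foldl_merge_mem a' t')))
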